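/- Let U ∈ ℂ^(n×n) be unitary with columns u₁, …, uₙ and M ⊆ {1, …, n} with |M| = m. Let X_R, X_I ∈ ℝ^n be random vectors with all 2n entries mutually independent, each of variance at most 1/4. Define Y[k] = Σ_{j=1}^{n} (Σ_{i ∈ M} (u_i[k])* u_j[i]) · (X_R[j] + i·X_I[j]). Then (1/n) Σ_{k=1}^{n} Var(Y[k]) ≤ m / (2n). -/

import Mathlib

/-!
Write `c k j = ∑ i ∈ M, conj (U k i) * U i j`, so that `Y k = ∑ j, c k j * (XR j + XI j * I)`.
The real and imaginary parts of `Y k` are real linear combinations of the `2n` independent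
variables `XR j`, `XI j`, with squared coefficients summing to `∑ j, |c k j|²` in both cases;
hence `E|Y k - E Y k|² = Var (re Y k) + Var (im Y k) ≤ (1/2) ∑ j, |c k j|²`.
The row `c k` is the image under the unitary `U` of the vector `i ↦ 1_M(i) conj (U k i)`, so
`∑ j, |c k j|² = ∑ i ∈ M, |U k i|²`, and summing over `k` the unit columns of `U` give `|M| = m`.
-/

open MeasureTheory ProbabilityTheory Finset

namespace Matrix

theorem sum_normSq_vecMul_of_mul_conjTranspose_eq_one {n : Type*} [Fintype n] [DecidableEq n]
    {U : Matrix n n ℂ} (hU : U * Uᴴ = 1) (w : n → ℂ) :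
    ∑ j, Complex.normSq ((w ᵥ* U) j) = ∑ i, Complex.normSq (w i) := by
  have hdot (v : n → ℂ) : ((∑ j, Complex.normSq (v j) : ℝ) : ℂ) = v ⬝ᵥ star v := by
    simp [dotProduct, Complex.mul_conj]
  have hiso : (w ᵥ* U) ⬝ᵥ star (w ᵥ* U) = w ⬝ᵥ star w := by
    rw [star_vecMul, dotProduct_mulVec, vecMul_vecMul, hU, vecMul_one]
  exact_mod_cast (hdot _).trans (hiso.trans (hdot w).symm)

theorem sum_sum_normSq_sum_conj_mul_eq_card {n : Type*} [Fintype n] [DecidableEq n]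
    {U : Matrix n n ℂ} (hU : U ∈ unitaryGroup n ℂ) (M : Finset n) :
    ∑ k, ∑ j, Complex.normSq (∑ i ∈ M, starRingEnd ℂ (U k i) * U i j) = M.card := by
  have hrow (k : n) : ∑ j, Complex.normSq (∑ i ∈ M, starRingEnd ℂ (U k i) * U i j)
      = ∑ i ∈ M, Complex.normSq (U k i) := by
    have := sum_normSq_vecMul_of_mul_conjTranspose_eq_one (mem_unitaryGroup_iff.mp hU)
      (fun i => if i ∈ M then starRingEnd ℂ (U k i) else 0)
    simpa only [vecMul, dotProduct, ite_mul, zero_mul, Finset.sum_ite_mem, Finset.univ_inter,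
      apply_ite Complex.normSq, Complex.normSq_zero, Complex.normSq_conj] using this
  have hcol (i : n) : ∑ k, Complex.normSq (U k i) = 1 := by
    have := congr_fun (congr_fun (mem_unitaryGroup_iff'.mp hU) i) i
    simp only [mul_apply, star_apply, one_apply_eq, RCLike.star_def,
      ← Complex.normSq_eq_conj_mul_self] at this
    exact_mod_cast this
  rw [Finset.sum_congr rfl fun k _ => hrow k, Finset.sum_comm]
  simp [hcol]

end Matrix

namespace ProbabilityTheory

variable {Ω : Type*} [MeasurableSpace Ω] {μ : Measure Ω}

theorem integral_norm_sub_integral_sq_le_variance_re_add_im [IsFiniteMeasure μ] {Y : Ω → ℂ}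
    (hY : AEStronglyMeasurable Y μ) :
    ∫ ω, ‖Y ω - ∫ ω', Y ω' ∂μ‖ ^ 2 ∂μ
      ≤ variance (fun ω => (Y ω).re) μ + variance (fun ω => (Y ω).im) μ := by
  by_cases hY2 : MemLp Y 2 μ
  · have hre := integral_re (hY2.integrable one_le_two)
    have him := integral_im (hY2.integrable one_le_two)
    simp only [RCLike.re_to_complex, RCLike.im_to_complex] at hre him
    rw [variance_eq_integral (X := fun ω => (Y ω).re) hY.aemeasurable.re,
      variance_eq_integral (X := fun ω => (Y ω).im) hY.aemeasurable.im, hre, him,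
      ← integral_add]
    · refine (integral_congr_ae (Filter.Eventually.of_forall fun ω => ?_)).le
      simp only [Complex.sq_norm, Complex.normSq_apply, Complex.sub_re, Complex.sub_im]
      ring
    · simpa using (hY2.re.sub (memLp_const _)).integrable_sq
    · simpa using (hY2.im.sub (memLp_const _)).integrable_sq
  · have hnot : ¬ Integrable (fun ω => ‖Y ω - ∫ ω', Y ω' ∂μ‖ ^ 2) μ := fun h => hY2 <| by
      convert ((memLp_two_iff_integrable_sq_norm (hY.sub aestronglyMeasurable_const)).mpr h).add
        (memLp_const (∫ ω', Y ω' ∂μ)) using 1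
      simp
    rw [integral_undef hnot]
    exact add_nonneg (variance_nonneg _ _) (variance_nonneg _ _)

variable [IsProbabilityMeasure μ]

/-- By independence the law of `(X, W)` is a product measure, so by Fubini some translate
`x₀ + W` is square integrable. -/
theorem IndepFun.memLp_two_right_of_add {X W : Ω → ℝ} (hX : AEMeasurable X μ)
    (hW : AEMeasurable W μ) (hXW : IndepFun X W μ) (h : MemLp (X + W) 2 μ) : MemLp W 2 μ := by
  set f : ℝ × ℝ → ℝ := fun p => ‖p.1 + p.2‖ ^ 2
  have hf : Measurable f := (measurable_fst.add measurable_snd).norm.pow_const 2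
  have hmap : μ.map (fun ω => (X ω, W ω)) = (μ.map X).prod (μ.map W) :=
    (indepFun_iff_map_prod_eq_prod_map_map hX hW).mp hXW
  have hint : Integrable f ((μ.map X).prod (μ.map W)) := by
    rw [← hmap, integrable_map_measure hf.aestronglyMeasurable (hX.prodMk hW)]
    exact (memLp_two_iff_integrable_sq_norm (hX.add hW).aestronglyMeasurable).mp h
  have := Measure.isProbabilityMeasure_map (μ := μ) hX
  obtain ⟨x₀, hx₀⟩ := hint.prod_right_ae.exists
  have hshift : MemLp (fun ω => x₀ + W ω) 2 μ := by
    refine (memLp_two_iff_integrable_sq_norm (hW.const_add x₀).aestronglyMeasurable).mpr ?_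
    exact (integrable_map_measure (hf.comp measurable_prodMk_left).aestronglyMeasurable
      hW).mp hx₀
  convert hshift.sub (memLp_const x₀) using 1
  ext ω
  simp

/-- Off `L²` Mathlib's `variance` is `0`, so only the `L²` case has content; there every
summand is in `L²` by `IndepFun.memLp_two_right_of_add`. -/
theorem iIndepFun.variance_sum_le {ι : Type*} {Z : ι → Ω → ℝ} (hZ : ∀ i, Measurable (Z i))
    (hind : iIndepFun Z μ) (s : Finset ι) :
    variance (∑ i ∈ s, Z i) μ ≤ ∑ i ∈ s, variance (Z i) μ := by
  classical
  by_cases hs : MemLp (∑ i ∈ s, Z i) 2 μ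
  · refine (IndepFun.variance_sum (fun i hi => ?_) fun i _ j _ hij => hind.indepFun hij).le
    have hrest := hind.indepFun_finsetSum_of_notMem hZ (s.notMem_erase i)
    refine hrest.memLp_two_right_of_add
      (Finset.aemeasurable_sum _ fun j _ => (hZ j).aemeasurable) (hZ i).aemeasurable ?_
    rwa [Finset.sum_erase_add _ _ hi]
  · rw [variance_of_not_memLp
      (Finset.aemeasurable_sum s fun i _ => (hZ i).aemeasurable).aestronglyMeasurable hs]
    exact Finset.sum_nonneg fun i _ => variance_nonneg _ _

theorem iIndepFun.variance_sum_mul_le {ι : Type*} [Fintype ι] {Z : ι → Ω → ℝ}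
    (hZ : ∀ i, Measurable (Z i)) (hind : iIndepFun Z μ) {v : ℝ}
    (hv : ∀ i, variance (Z i) μ ≤ v) (a : ι → ℝ) :
    variance (fun ω => ∑ i, a i * Z i ω) μ ≤ v * ∑ i, a i ^ 2 := by
  have hind' : iIndepFun (fun i ω => a i * Z i ω) μ :=
    hind.comp (fun i x => a i * x) fun i => measurable_id.const_mul _
  calc variance (fun ω => ∑ i, a i * Z i ω) μ
      = variance (∑ i, fun ω => a i * Z i ω) μ := by rw [Finset.sum_fn]
    _ ≤ ∑ i, variance (fun ω => a i * Z i ω) μ :=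
      hind'.variance_sum_le (fun i => (hZ i).const_mul _) _
    _ = ∑ i, a i ^ 2 * variance (Z i) μ := by simp only [variance_const_mul]
    _ ≤ ∑ i, a i ^ 2 * v := by gcongr with i; exact hv i
    _ = v * ∑ i, a i ^ 2 := by rw [Finset.mul_sum]; simp only [mul_comm]

theorem iIndepFun.integral_norm_sub_integral_sq_le {ι : Type*} [Fintype ι]
    {Z : ι ⊕ ι → Ω → ℝ} (hZ : ∀ i, Measurable (Z i)) (hind : iIndepFun Z μ) {v : ℝ}
    (hv : ∀ i, variance (Z i) μ ≤ v) (c : ι → ℂ) {Y : Ω → ℂ}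
    (hY : ∀ ω, Y ω = ∑ j, c j * ((Z (.inl j) ω : ℂ) + (Z (.inr j) ω : ℂ) * Complex.I)) :
    ∫ ω, ‖Y ω - ∫ ω', Y ω' ∂μ‖ ^ 2 ∂μ ≤ 2 * v * ∑ j, Complex.normSq (c j) := by
  have hYmeas : Measurable Y := by
    rw [funext hY]
    fun_prop
  have hre : (fun ω => (Y ω).re) =
      fun ω => ∑ i, Sum.elim (fun j => (c j).re) (fun j => -(c j).im) i * Z i ω := by
    ext ω
    simp [hY, Fintype.sum_sum_type, sub_eq_add_neg, Finset.sum_add_distrib]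
  have him : (fun ω => (Y ω).im) =
      fun ω => ∑ i, Sum.elim (fun j => (c j).im) (fun j => (c j).re) i * Z i ω := by
    ext ω
    simp [hY, Fintype.sum_sum_type, ← Finset.sum_add_distrib, add_comm]
  calc ∫ ω, ‖Y ω - ∫ ω', Y ω' ∂μ‖ ^ 2 ∂μ
      ≤ variance (fun ω => (Y ω).re) μ + variance (fun ω => (Y ω).im) μ :=
        integral_norm_sub_integral_sq_le_variance_re_add_im hYmeas.aestronglyMeasurable
    _ ≤ v * ∑ i, Sum.elim (fun j => (c j).re) (fun j => -(c j).im) i ^ 2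
        + v * ∑ i, Sum.elim (fun j => (c j).im) (fun j => (c j).re) i ^ 2 := by
        rw [hre, him]
        exact add_le_add (hind.variance_sum_mul_le hZ hv _) (hind.variance_sum_mul_le hZ hv _)
    _ = 2 * v * ∑ j, Complex.normSq (c j) := by
        simp only [Fintype.sum_sum_type, Sum.elim_inl, Sum.elim_inr, Complex.normSq_apply,
          neg_sq, Finset.mul_sum, ← Finset.sum_add_distrib]
        refine Finset.sum_congr rfl fun j _ => ?_
        ring

end ProbabilityTheory

theorem stmt7_general {Ω : Type*} [MeasurableSpace Ω] (μ : Measure Ω) [IsProbabilityMeasure μ]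
    (n : ℕ) (U : Matrix (Fin n) (Fin n) ℂ)
    (hU : U ∈ Matrix.unitaryGroup (Fin n) ℂ)
    (M : Finset (Fin n)) (m : ℕ) (hM : M.card = m)
    (XR XI : Fin n → Ω → ℝ)
    (hXRmeas : ∀ j, Measurable (XR j)) (hXImeas : ∀ j, Measurable (XI j))
    (hindep : iIndepFun (Sum.elim XR XI :
      (Fin n ⊕ Fin n) → Ω → ℝ) μ)
    (hvarR : ∀ j, variance (XR j) μ ≤ 1/4)
    (hvarI : ∀ j, variance (XI j) μ ≤ 1/4)
    (Y : Fin n → Ω → ℂ)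
    (hY : ∀ k ω, Y k ω =
      ∑ j : Fin n, (∑ i ∈ M, (starRingEnd ℂ) (U k i) * U i j) *
        ((XR j ω : ℂ) + (XI j ω : ℂ) * Complex.I)) :
    (1 / (n:ℝ)) * ∑ k : Fin n,
        ∫ ω, ‖Y k ω - ∫ ω', Y k ω' ∂μ‖ ^ 2 ∂μ
      ≤ m / (2 * n) := by
  have hmeas : ∀ i, Measurable (Sum.elim XR XI i) := by
    rintro (j | j)
    exacts [hXRmeas j, hXImeas j]
  have hvar : ∀ i, variance (Sum.elim XR XI i) μ ≤ 1 / 4 := by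
    rintro (j | j)
    exacts [hvarR j, hvarI j]
  calc (1 / (n:ℝ)) * ∑ k : Fin n, ∫ ω, ‖Y k ω - ∫ ω', Y k ω' ∂μ‖ ^ 2 ∂μ
      ≤ (1 / (n:ℝ)) * ∑ k : Fin n, 2 * (1 / 4) * ∑ j : Fin n,
          Complex.normSq (∑ i ∈ M, (starRingEnd ℂ) (U k i) * U i j) := by
        gcongr with k
        exact hindep.integral_norm_sub_integral_sq_le hmeas hvar _ (hY k)
    _ = m / (2 * n) := by
        rw [← Finset.mul_sum, Matrix.sum_sum_normSq_sum_conj_mul_eq_card hU, hM]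
        ring

theorem stmt7 {Ω : Type*} [MeasurableSpace Ω] (μ : Measure Ω) [IsProbabilityMeasure μ]
    (n : ℕ) (hn : 0 < n) (U : Matrix (Fin n) (Fin n) ℂ)
    (hU : U ∈ Matrix.unitaryGroup (Fin n) ℂ)
    (M : Finset (Fin n)) (m : ℕ) (hM : M.card = m)
    (XR XI : Fin n → Ω → ℝ)
    (hXRmeas : ∀ j, Measurable (XR j)) (hXImeas : ∀ j, Measurable (XI j))
    (hindep : iIndepFun (Sum.elim XR XI :
      (Fin n ⊕ Fin n) → Ω → ℝ) μ)
    (hvarR : ∀ j, variance (XR j) μ ≤ 1/4)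
    (hvarI : ∀ j, variance (XI j) μ ≤ 1/4)
    (Y : Fin n → Ω → ℂ)
    (hY : ∀ k ω, Y k ω =
      ∑ j : Fin n, (∑ i ∈ M, (starRingEnd ℂ) (U k i) * U i j) *
        ((XR j ω : ℂ) + (XI j ω : ℂ) * Complex.I)) :
    (1 / (n:ℝ)) * ∑ k : Fin n,
        ∫ ω, ‖Y k ω - ∫ ω', Y k ω' ∂μ‖ ^ 2 ∂μ
      ≤ m / (2 * n) :=
  stmt7_general μ n U hU M m hM XR XI hXRmeas hXImeas hindep hvarR hvarI Y hY
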